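/- For a Fishburn tree T with maximum label k and Fishburn cover B_1...B_k, the maximal right path W_i indexed by i is diagonal (its first node lies on the leftmost path from the root) if and only if i ∈ B_i. -/

import Mathlib

/-!
A diagonal maximal right path starts at a diagonal node `d`, and `b(d) = ℓ(d)`, so its
index occurs on it. A non-diagonal path with index `i` starts at the left child of the
treetop labelled `i`, so it lies in the left subtree of that node, where every label
is smaller than `i` because labels decrease strictly to the left.
-/

inductive LTree where
  | nil : LTree
  | node : LTree → ℕ → LTree → LTree
deriving DecidableEq

namespace LTree

def size : LTree → ℕ
  | nil => 0
  | node L _ R => L.size + 1 + R.size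

/-- The in-order sequence of labels. -/
def inorder : LTree → List ℕ
  | nil => []
  | node L r R => L.inorder ++ r :: R.inorder

/-- The maximum label (0 for the empty tree). -/
def maxL : LTree → ℕ
  | nil => 0
  | node L r R => max r (max L.maxL R.maxL)

/-- Weakly decreasing along every root-to-leaf path. -/
def Decreasing : LTree → Prop
  | nil => True
  | node L r R => L.maxL ≤ r ∧ R.maxL ≤ r ∧ L.Decreasing ∧ R.Decreasing

/-- Strictly decreasing to the left: every label in a left subtree
is strictly smaller than the label of its parent. -/
def StrictLeft : LTree → Prop
  | nil => True
  | node L r R => L.maxL < r ∧ L.StrictLeft ∧ R.StrictLeft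

/-- An endotree: decreasing, strictly decreasing to the left, labels in `[n]`. -/
def IsEndotree (T : LTree) : Prop :=
  T.Decreasing ∧ T.StrictLeft ∧ ∀ l ∈ T.inorder, 1 ≤ l ∧ l ≤ T.size

/-- A regular endotree: the set of labels equals `[k]` for some `k ≤ n`. -/
def IsRegularEndotree (T : LTree) : Prop :=
  T.IsEndotree ∧ ∃ k ≤ T.size, ∀ l, l ∈ T.inorder ↔ (1 ≤ l ∧ l ≤ k)

end LTree

/-- An endofunction on `[n]`, identified with a word of length `n` over `[n]`. -/
def IsEndofun (x : List ℕ) : Prop := ∀ a ∈ x, 1 ≤ a ∧ a ≤ x.length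

/-- A Cayley permutation: an endofunction whose image is `[k]` for some `k ≤ n`. -/
def IsCayley (x : List ℕ) : Prop :=
  IsEndofun x ∧ ∃ k ≤ x.length, ∀ j, j ∈ x ↔ (1 ≤ j ∧ j ≤ k)

namespace LTree

/-- The list of (subtrees rooted at the) nodes of `T`, in in-order. -/
def nodes : LTree → List LTree
  | nil => []
  | node L r R => L.nodes ++ node L r R :: R.nodes

/-- Root label (0 for the empty tree). -/
def rootLabel : LTree → ℕ
  | nil => 0
  | node _ r _ => r

/-- Left subtree. -/
def leftT : LTree → LTree
  | nil => nil
  | node L _ _ => L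

/-- Indices `i` (0-based) such that the `i`-th in-order node `v_{i+1}` is in
`treetops(T)`: either the first node or a node with nonempty left subtree. -/
def treetopsIdx (T : LTree) : Set ℕ :=
  {i | i < T.size ∧ (i = 0 ∨ (T.nodes.getD i nil).leftT ≠ nil)}

/-- Indices `i` such that the label of the `i`-th in-order node does not occur
at any earlier in-order node. -/
def unseenIdx (T : LTree) : Set ℕ :=
  {i | i < T.size ∧
    ∀ j < i, (T.nodes.getD j nil).rootLabel ≠ (T.nodes.getD i nil).rootLabel}

/-- A Fishburn tree: a regular endotree with `treetops(T) = unseen(T)`. -/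
def IsFishburnTree (T : LTree) : Prop :=
  T.IsRegularEndotree ∧ treetopsIdx T = unseenIdx T

end LTree

namespace LTree

/-- The subtree at a position (path from the root: `false` = left, `true` = right). -/
def subtreeAt : LTree → List Bool → Option LTree
  | t, [] => some t
  | nil, _ :: _ => none
  | node L _ _, false :: q => L.subtreeAt q
  | node _ _ R, true :: q => R.subtreeAt q

/-- `p` is the position of a node of `T`. -/
def IsNodePos (T : LTree) (p : List Bool) : Prop :=
  ∃ L r R, T.subtreeAt p = some (node L r R)

/-- The label of the node at position `p` (0 if there is no node there). -/
def labelAt (T : LTree) (p : List Bool) : ℕ :=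
  match T.subtreeAt p with
  | some t => t.rootLabel
  | none => 0

/-- `p` lies on the diagonal of `T`, i.e. on the maximal left path from the root. -/
def OnDiag (p : List Bool) : Prop := ∀ b ∈ p, b = false

/-- The node at position `p` is a treetop: the first in-order node (the deepest
node of the diagonal) or a node with a left child. -/
def PosTreetop (T : LTree) (p : List Bool) : Prop :=
  IsNodePos T p ∧ (IsNodePos T (p ++ [false]) ∨ OnDiag p)

/-- Auxiliary computation of the index of the maximal right path through a node:
the state records whether the current node is on the diagonal and the current
path index. -/
def blabelAux : LTree → Bool → ℕ → List Bool → ℕ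
  | _, _, cur, [] => cur
  | nil, _, _, _ :: _ => 0
  | node _ _ R, _, cur, true :: q => blabelAux R false cur q
  | node L r _, d, _, false :: q =>
      blabelAux L d (if d then L.rootLabel else r) q

/-- The index `b(u)` of the maximal right path containing the node at `p`:
`b(root) = ℓ(root)`; `b(right child of u) = b(u)`; `b(left child of u)` is
`ℓ(left child)` if `u` is diagonal and `ℓ(u)` otherwise. -/
def blabel (T : LTree) (p : List Bool) : ℕ :=
  blabelAux T true T.rootLabel p

/-- The list of positions of the nodes of `T`. -/
def positions : LTree → List (List Bool)
  | nil => []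
  | node L _ R =>
      [] :: (L.positions.map (List.cons false) ++ R.positions.map (List.cons true))

end LTree

namespace LTree

lemma labelAt_le_maxL : ∀ (T : LTree) (p : List Bool), T.labelAt p ≤ T.maxL
  | nil, [] => le_rfl
  | nil, _ :: _ => le_rfl
  | node _ _ _, [] => le_max_left _ _
  | node L _ _, false :: q =>
      (labelAt_le_maxL L q).trans (le_max_left _ _ |>.trans (le_max_right _ _))
  | node _ _ R, true :: q =>
      (labelAt_le_maxL R q).trans (le_max_right _ _ |>.trans (le_max_right _ _))

lemma blabel_eq_labelAt_of_onDiag :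
    ∀ (T : LTree) (p : List Bool), OnDiag p → T.blabel p = T.labelAt p
  | nil, [], _ => rfl
  | nil, _ :: _, _ => rfl
  | node _ _ _, [], _ => rfl
  | node _ _ _, true :: _, hp => absurd (hp true List.mem_cons_self) Bool.noConfusion
  | node L _ _, false :: q, hp =>
      blabel_eq_labelAt_of_onDiag L q fun b hb => hp b (List.mem_cons_of_mem _ hb)

lemma labelAt_lt_blabelAux_false_or_eq :
    ∀ (T : LTree) (q : List Bool) (cur : ℕ), T.StrictLeft → T.IsNodePos q →
      T.labelAt q < blabelAux T false cur q ∨ blabelAux T false cur q = cur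
  | nil, [], _, _, _ => Or.inr rfl
  | node _ _ _, [], _, _, _ => Or.inr rfl
  | nil, _ :: _, _, _, ⟨_, _, _, hq⟩ => nomatch hq
  | node _ _ R, true :: q, cur, ⟨_, _, hR⟩, hq =>
      labelAt_lt_blabelAux_false_or_eq R q cur hR hq
  | node L r _, false :: q, _, ⟨hLr, hL, _⟩, hq => by
      refine Or.inl ?_
      rcases labelAt_lt_blabelAux_false_or_eq L q r hL hq with hlt | heq
      · exact hlt
      · change L.labelAt q < blabelAux L false r q
        rw [heq]
        exact (labelAt_le_maxL L q).trans_lt hLr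

lemma exists_onDiag_blabel_eq_or_labelAt_lt :
    ∀ (T : LTree) (p : List Bool), T.StrictLeft → T.IsNodePos p →
      (∃ q, T.IsNodePos q ∧ OnDiag q ∧ T.blabel q = T.blabel p) ∨
        T.labelAt p < T.blabel p
  | _, [], _, hp => Or.inl ⟨[], hp, List.forall_mem_nil _, rfl⟩
  | nil, _ :: _, _, ⟨_, _, _, hp⟩ => nomatch hp
  | node L r R, true :: q, ⟨_, _, hR⟩, hp => by
      rcases labelAt_lt_blabelAux_false_or_eq R q r hR hp with hlt | heq
      · exact Or.inr hlt
      · exact Or.inl ⟨[], ⟨L, r, R, rfl⟩, List.forall_mem_nil _, heq.symm⟩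
  | node L r R, false :: q, ⟨_, hL, _⟩, hp => by
      rcases exists_onDiag_blabel_eq_or_labelAt_lt L q hL hp with ⟨q', hq', hd, heq⟩ | hlt
      · refine Or.inl ⟨false :: q', hq', ?_, heq⟩
        exact List.forall_mem_cons.mpr ⟨rfl, hd⟩
      · exact Or.inr hlt

end LTree

theorem fishburn_diagonal_iff_general (T : LTree) (h : T.IsFishburnTree)
    (i : ℕ) :
    (∃ p, T.IsNodePos p ∧ LTree.OnDiag p ∧ T.blabel p = i) ↔
      (∃ p, T.IsNodePos p ∧ T.blabel p = i ∧ T.labelAt p = i) := by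
  have hstrict : T.StrictLeft := h.1.1.2.1
  constructor
  · rintro ⟨p, hp, hdiag, rfl⟩
    exact ⟨p, hp, rfl, (T.blabel_eq_labelAt_of_onDiag p hdiag).symm⟩
  · rintro ⟨p, hp, hb, hl⟩
    rcases T.exists_onDiag_blabel_eq_or_labelAt_lt p hstrict hp with ⟨q, hq, hd, heq⟩ | hlt
    · exact ⟨q, hq, hd, heq.trans hb⟩
    · omega

/-- in a Fishburn tree with maximum label `k` and Fishburn cover
`B_1 … B_k`, the maximal right path `W_i` is diagonal (contains a node on the
leftmost path from the root) if and only if `i ∈ B_i` (some node of `W_i` has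
label `i`). -/
theorem fishburn_diagonal_iff (T : LTree) (h : T.IsFishburnTree)
    (i : ℕ) (h1 : 1 ≤ i) (h2 : i ≤ T.maxL) :
    (∃ p, T.IsNodePos p ∧ LTree.OnDiag p ∧ T.blabel p = i) ↔
      (∃ p, T.IsNodePos p ∧ T.blabel p = i ∧ T.labelAt p = i) :=
  fishburn_diagonal_iff_general T h i
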